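/- arXiv:1603.02221 — 2 statements merged into one kernel-verified Lean document; each statement's English description precedes it below -/
import Mathlib

section
/- On the five-point bowtie-plus-point poset P₄ (elements a, b, c, d, w with a < c, a < d, b < c, b < d, w < c, and a < w), the generator L₄ with L_{a,b} = L_{w,b} = L_{c,d} = L_{d,b} = L_{b,d} = 1 and all other off-diagonal entries 0 is monotone but not completely monotone. -/
open Finset
open scoped Classical

/-- The vector `W^{Γ,x,y}` from the paper, as a function of coordinates `(v,z)`. -/
noncomputable def Wvec {S : Type*} [PartialOrder S] (Γ : Finset S) (x y v z : S) : ℝ :=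
  if (x ≤ y ∧ y ∉ Γ ∧ v = y ∧ z ∈ Γ) ∨ (y ≤ x ∧ y ∈ Γ ∧ v = y ∧ z ∉ Γ) then 1
  else if (x ≤ y ∧ y ∉ Γ ∧ v = x ∧ z ∈ Γ) ∨ (y ≤ x ∧ y ∈ Γ ∧ v = x ∧ z ∉ Γ) then -1
  else 0

/-- The vector `I_f` from the paper: `(I_f)_{x,y} = 1` iff `f x = y`. -/
noncomputable def Ivec {S : Type*} (f : S → S) (x y : S) : ℝ := if f x = y then 1 else 0

/-- `Γ` is an up-set: upward closed. -/
def IsUpSet {S : Type*} [Preorder S] (Γ : Finset S) : Prop :=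
  ∀ a b : S, a ∈ Γ → a ≤ b → b ∈ Γ

/-- Euclidean inner product `⟨L, W^{Γ,x,y}⟩` over the off-diagonal coordinates `S₂`. -/
noncomputable def dotW {S : Type*} [Fintype S] [PartialOrder S]
    (L : S → S → ℝ) (Γ : Finset S) (x y : S) : ℝ :=
  ∑ p ∈ Finset.univ.filter (fun p : S × S => p.1 ≠ p.2), L p.1 p.2 * Wvec Γ x y p.1 p.2

/-- `L` is (the off-diagonal part of) a monotone generator. -/
def IsMonGen {S : Type*} [Fintype S] [PartialOrder S] (L : S → S → ℝ) : Prop :=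
  (∀ x y : S, x ≠ y → 0 ≤ L x y) ∧
    ∀ Γ : Finset S, IsUpSet Γ → ∀ x y : S, 0 ≤ dotW L Γ x y

/-- `L` is a completely monotone generator: a nonnegative combination of the `I_f`
over increasing maps `f`. -/
def IsCMonGen {S : Type*} [Fintype S] [PartialOrder S] (L : S → S → ℝ) : Prop :=
  ∃ Λ : (S → S) → ℝ, (∀ f, 0 ≤ Λ f) ∧ (∀ f, ¬ Monotone f → Λ f = 0) ∧
    ∀ x y : S, x ≠ y → L x y = ∑ f : S → S, Λ f * Ivec f x y

/-- The five-point poset `P₄`: bowtie `a,b < c,d` with extra element `w`, `a < w < c`. -/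
inductive P4 | a | b | c | d | w
  deriving DecidableEq

instance : Fintype P4 :=
  Fintype.ofList [.a, .b, .c, .d, .w] (fun x => by cases x <;> simp)

/-- Order on `P₄`: `a < c, a < d, b < c, b < d, w < c, a < w`. -/
def P4.ble : P4 → P4 → Bool
  | .a, .a | .a, .w | .a, .c | .a, .d => true
  | .b, .b | .b, .c | .b, .d => true
  | .w, .w | .w, .c => true
  | .c, .c => true
  | .d, .d => true
  | _, _ => false

instance : LE P4 := ⟨fun x y => P4.ble x y⟩
instance : DecidableRel (α := P4) (· ≤ ·) :=
  fun x y => inferInstanceAs (Decidable (P4.ble x y = true))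

instance : PartialOrder P4 where
  le_refl := by decide
  le_trans := by decide
  le_antisymm := by decide

/-- The generator `L₄` on `P₄`: rates `L_{a,b}=L_{w,b}=L_{c,d}=L_{d,b}=L_{b,d}=1`. -/
noncomputable def L4 : P4 → P4 → ℝ := fun x y =>
  if (x = .a ∧ y = .b) ∨ (x = .w ∧ y = .b) ∨ (x = .c ∧ y = .d) ∨
     (x = .d ∧ y = .b) ∨ (x = .b ∧ y = .d) then 1 else 0

/-!
`L₄` is the jump generator `I_g` of the map `g = (a ↦ b, b ↦ d, c ↦ d, d ↦ b, w ↦ b)`.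
For a jump generator and an up-set `Γ`, `⟨I_g, W^{Γ,x,y}⟩ = [g y ∈ A] - [g x ∈ A]` when `x ≠ y`,
where `A` is the set of columns supporting `W^{Γ,x,y}`; so monotonicity is a finite condition
on `g`. Complete monotonicity fails by Farkas' lemma: a cost on jumps that is nonnegative on
every increasing map but negative on `L₄` separates `L₄` from the cone spanned by the `I_f`.
-/

open Finset

section General

variable {S : Type*}

theorem sum_offDiag_Ivec_mul [Fintype S] (f : S → S) (c : S → S → ℝ) :
    ∑ p ∈ univ.filter (fun p : S × S => p.1 ≠ p.2), Ivec f p.1 p.2 * c p.1 p.2 =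
      ∑ x, if f x = x then 0 else c x (f x) := by
  rw [sum_filter, Fintype.sum_prod_type]
  refine sum_congr rfl fun x _ => ?_
  rw [sum_eq_single (f x)]
  · simp [Ivec, eq_comm]
  · intro y _ hy
    simp [Ivec, Ne.symm hy]
  · simp

variable [PartialOrder S]

/-- The targets `z` for which column `z` of `W^{Γ,x,y}` is nonzero. -/
def Crosses (Γ : Finset S) (x y z : S) : Prop :=
  (x ≤ y ∧ y ∉ Γ ∧ z ∈ Γ) ∨ (y ≤ x ∧ y ∈ Γ ∧ z ∉ Γ)

theorem Wvec_self_eq_zero {Γ : Finset S} (hΓ : IsUpSet Γ) (x y v : S) :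
    Wvec Γ x y v v = 0 := by
  have := hΓ x y
  have := hΓ y x
  unfold Wvec
  split_ifs <;> aesop

theorem Wvec_diag_nonneg (Γ : Finset S) (x v z : S) : 0 ≤ Wvec Γ x x v z := by
  unfold Wvec
  split_ifs <;> simp_all

theorem Wvec_of_ne (Γ : Finset S) {x y : S} (hxy : x ≠ y) (v z : S) :
    Wvec Γ x y v z =
      (if v = y then if Crosses Γ x y z then 1 else 0 else 0) -
        (if v = x then if Crosses Γ x y z then 1 else 0 else 0) := by
  unfold Wvec Crosses
  split_ifs <;> simp_all

theorem dotW_Ivec [Fintype S] {Γ : Finset S} (hΓ : IsUpSet Γ) (g : S → S) (x y : S) :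
    dotW (Ivec g) Γ x y = ∑ v, Wvec Γ x y v (g v) := by
  rw [dotW, sum_offDiag_Ivec_mul]
  refine sum_congr rfl fun v _ => ?_
  split_ifs with h
  · rw [h, Wvec_self_eq_zero hΓ]
  · rfl

theorem isMonGen_Ivec [Fintype S] {g : S → S}
    (hg : ∀ Γ : Finset S, IsUpSet Γ → ∀ x y, Crosses Γ x y (g x) → Crosses Γ x y (g y)) :
    IsMonGen (Ivec g) := by
  refine ⟨fun x y _ => by unfold Ivec; split_ifs <;> norm_num, fun Γ hΓ x y => ?_⟩
  rw [dotW_Ivec hΓ]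
  rcases eq_or_ne x y with rfl | hxy
  · exact sum_nonneg fun v _ => Wvec_diag_nonneg Γ x v (g v)
  · simp only [Wvec_of_ne Γ hxy, sum_sub_distrib, sum_ite_eq', mem_univ, if_true]
    have := hg Γ hΓ x y
    split_ifs <;> simp_all

theorem not_isCMonGen_of_separating [Fintype S] {L : S → S → ℝ} (c : S → S → ℝ)
    (hc : ∀ f : S → S, Monotone f → 0 ≤ ∑ x, if f x = x then 0 else c x (f x))
    (hL : ∑ p ∈ univ.filter (fun p : S × S => p.1 ≠ p.2), L p.1 p.2 * c p.1 p.2 < 0) :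
    ¬ IsCMonGen L := by
  rintro ⟨Λ, hΛ_nonneg, hΛ_mono, hL_eq⟩
  refine hL.not_ge ?_
  calc (0 : ℝ) ≤ ∑ f, Λ f * ∑ x, if f x = x then 0 else c x (f x) := by
        refine sum_nonneg fun f _ => ?_
        by_cases hf : Monotone f
        · exact mul_nonneg (hΛ_nonneg f) (hc f hf)
        · simp [hΛ_mono f hf]
    _ = ∑ p ∈ univ.filter (fun p : S × S => p.1 ≠ p.2), L p.1 p.2 * c p.1 p.2 := by
        simp_rw [← sum_offDiag_Ivec_mul, mul_sum, sum_comm (s := univ)]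
        refine sum_congr rfl fun p hp => ?_
        rw [hL_eq p.1 p.2 (mem_filter.1 hp).2, sum_mul]
        exact sum_congr rfl fun f _ => by ring

end General

namespace P4

theorem sum_univ {M : Type*} [AddCommMonoid M] (g : P4 → M) :
    ∑ x, g x = g .a + g .b + g .c + g .d + g .w := by
  simp [Finset.sum, Finset.univ, Fintype.elems, add_assoc]

def jump : P4 → P4
  | .a => .b
  | .b => .d
  | .c => .d
  | .d => .b
  | .w => .b

theorem L4_eq_Ivec_jump : L4 = Ivec jump := by
  funext x y
  cases x <;> cases y <;> simp [L4, Ivec, jump]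

theorem jump_crosses :
    ∀ Γ : Finset P4, IsUpSet Γ → ∀ x y, Crosses Γ x y (jump x) → Crosses Γ x y (jump y) := by
  unfold IsUpSet Crosses
  decide

/- The only negative costs are those of the jumps `b → d` and `d → b`; an increasing map uses
at most one of them (`b ≤ d`), and either one forces it to move `w` at cost `1`. -/
def cert : P4 → P4 → ℤ
  | .a, .b | .c, .d => 0
  | .b, .d | .d, .b => -1
  | _, _ => 1

theorem cert_cost_nonneg (f : P4 → P4) (hf : Monotone f) :
    0 ≤ ∑ x, if f x = x then 0 else cert x (f x) := by
  have haw := hf (show P4.a ≤ .w by decide)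
  have hac := hf (show P4.a ≤ .c by decide)
  have had := hf (show P4.a ≤ .d by decide)
  have hbc := hf (show P4.b ≤ .c by decide)
  have hbd := hf (show P4.b ≤ .d by decide)
  have hwc := hf (show P4.w ≤ .c by decide)
  rw [sum_univ]
  generalize f .a = va, f .b = vb, f .c = vc, f .d = vd, f .w = vw at *
  revert va vb vc vd vw
  decide

end P4

/-- `L₄` is monotone but not completely monotone on `P₄`. -/
theorem L4_mon_not_cmon : IsMonGen L4 ∧ ¬ IsCMonGen L4 := by
  rw [P4.L4_eq_Ivec_jump]
  refine ⟨isMonGen_Ivec P4.jump_crosses,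
    not_isCMonGen_of_separating (fun x y => (P4.cert x y : ℝ)) (fun f hf => ?_) ?_⟩
  · exact_mod_cast P4.cert_cost_nonneg f hf
  · rw [sum_offDiag_Ivec_mul P4.jump fun x y => (P4.cert x y : ℝ), P4.sum_univ]
    simp [P4.jump, P4.cert]
end

section
/- On the four-point bowtie poset B = {a, b, c, d} with a < c, a < d, b < c, b < d (a, b incomparable and c, d incomparable), every monotone generator is completely monotone: the cone {L ∈ (R⁺)^{S₂} : ⟨L, W^{Γ,x,y}⟩ ≥ 0 for all up-sets Γ and x, y ∈ B} equals the cone of nonnegative combinations of the vectors I_f over increasing maps f : B → B. -/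
open Finset
open scoped Classical

/-- The four-point bowtie poset: minimal `a, b`, each below the maximal `c, d`. -/
inductive B | a | b | c | d
  deriving DecidableEq

instance : Fintype B :=
  ⟨⟨{B.a, B.b, B.c, B.d}, by decide⟩, fun x => by cases x <;> decide⟩

def B.ble : B → B → Bool
  | .a, .a | .a, .c | .a, .d => true
  | .b, .b | .b, .c | .b, .d => true
  | .c, .c => true
  | .d, .d => true
  | _, _ => false

instance : LE B := ⟨fun x y => B.ble x y⟩
instance : DecidableRel (α := B) (· ≤ ·) :=
  fun x y => inferInstanceAs (Decidable (B.ble x y = true))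

instance : PartialOrder B where
  le_refl := by decide
  le_trans := by decide
  le_antisymm := by decide

/-!
Pairing a completely monotone generator with `W^{Γ,x,y}` reduces to the maps `I_f`: for
`x < y ∉ Γ` one has `⟨I_f, W^{Γ,x,y}⟩ = [f y ∈ Γ] - [f x ∈ Γ] ≥ 0` because `f` is increasing and
`Γ` is an up-set, and dually for `y < x`, `y ∈ Γ`.

Conversely, every point `y` of the bowtie is maximal or minimal, so testing `L` against
`Γ = {y}`, resp. `Γ = B \ {y}`, shows that in the column `L · y` the entry of the other point on
`y`'s level dominates the two entries from the opposite level. The layer-cake decomposition of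
that column is then a nonnegative combination of the `I_f` for the maps `f` collapsing the
dominating point and some of the opposite level onto `y`, and these maps are increasing.
-/

section MonGen

variable {S : Type*} [PartialOrder S]

-- For `x = y` the first branch of `Wvec` takes precedence, so `W^{Γ,y,y}` is not zero but
-- has only nonnegative entries.
lemma Wvec_self_nonneg (Γ : Finset S) (y v z : S) : 0 ≤ Wvec Γ y y v z := by
  unfold Wvec
  split_ifs <;> norm_num

variable [Fintype S]

lemma dotW_self_nonneg {L : S → S → ℝ} (hL : ∀ x y, x ≠ y → 0 ≤ L x y) (Γ : Finset S) (y : S) :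
    0 ≤ dotW L Γ y y :=
  Finset.sum_nonneg fun _ hp =>
    mul_nonneg (hL _ _ (Finset.mem_filter.1 hp).2) (Wvec_self_nonneg Γ y _ _)

lemma dotW_eq_zero (L : S → S → ℝ) {Γ : Finset S} {x y : S} (h₁ : ¬ (x ≤ y ∧ y ∉ Γ))
    (h₂ : ¬ (y ≤ x ∧ y ∈ Γ)) : dotW L Γ x y = 0 :=
  Finset.sum_eq_zero fun _ _ => by rw [Wvec, if_neg (by tauto), if_neg (by tauto), mul_zero]

lemma dotW_eq_sum_of_Wvec_diag {L : S → S → ℝ} {Γ : Finset S} {x y : S}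
    (h : ∀ v, Wvec Γ x y v v = 0) :
    dotW L Γ x y = ∑ v, ∑ z, L v z * Wvec Γ x y v z := by
  rw [dotW, Finset.sum_filter, ← Fintype.sum_prod_type']
  refine Finset.sum_congr rfl fun p _ => ?_
  split_ifs with hp
  · rfl
  · rw [not_not.1 hp, h, mul_zero]

lemma dotW_eq_sum_sub {L : S → S → ℝ} {Γ s : Finset S} {x w : S} (hx : x ∉ s) (hw : w ∉ s)
    (hW : ∀ v z, Wvec Γ x w v z =
      if z ∈ s then (if v = w then 1 else 0) - (if v = x then 1 else 0) else 0) :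
    dotW L Γ x w = ∑ z ∈ s, (L w z - L x z) := by
  have hdiag : ∀ v, Wvec Γ x w v v = 0 := fun v => by
    rw [hW]; split_ifs <;> simp_all
  rw [dotW_eq_sum_of_Wvec_diag hdiag, Finset.sum_comm, ← Fintype.sum_ite_mem s]
  refine Finset.sum_congr rfl fun z _ => ?_
  simp only [hW, mul_ite, mul_sub, mul_zero, mul_one]
  split_ifs <;> simp

lemma dotW_eq_sum_of_lt_of_notMem (L : S → S → ℝ) {Γ : Finset S} (hΓ : IsUpSet Γ) {x w : S}
    (hxw : x < w) (hw : w ∉ Γ) : dotW L Γ x w = ∑ z ∈ Γ, (L w z - L x z) := by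
  refine dotW_eq_sum_sub (fun hx => hw (hΓ x w hx hxw.le)) hw fun v z => ?_
  by_cases hz : z ∈ Γ <;> by_cases hvw : v = w <;> by_cases hvx : v = x <;>
    simp [Wvec, hz, hvw, hvx, hxw.le, hxw.not_ge, hw, hxw.ne, hxw.ne']

lemma dotW_eq_sum_of_lt_of_mem (L : S → S → ℝ) {Γ : Finset S} (hΓ : IsUpSet Γ) {x w : S}
    (hwx : w < x) (hw : w ∈ Γ) : dotW L Γ x w = ∑ z ∈ Γᶜ, (L w z - L x z) := by
  refine dotW_eq_sum_sub (by simpa using hΓ w x hw hwx.le) (by simpa using hw) fun v z => ?_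
  by_cases hz : z ∈ Γ <;> by_cases hvw : v = w <;> by_cases hvx : v = x <;>
    simp [Wvec, hz, hvw, hvx, hwx.le, hwx.not_ge, hw, hwx.ne, hwx.ne']

lemma IsMonGen.le_of_lt_of_isMax {L : S → S → ℝ} (hL : IsMonGen L) {x w y : S} (hy : IsMax y)
    (hxw : x < w) (hwy : w ≠ y) : L x y ≤ L w y := by
  have hΓ : IsUpSet ({y} : Finset S) := fun a b ha hab => by
    rw [Finset.mem_singleton] at ha ⊢
    exact (hy (ha ▸ hab)).antisymm (ha ▸ hab)
  have h := hL.2 _ hΓ x w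
  rw [dotW_eq_sum_of_lt_of_notMem L hΓ hxw (by simpa using hwy), Finset.sum_singleton] at h
  linarith

lemma IsMonGen.le_of_lt_of_isMin {L : S → S → ℝ} (hL : IsMonGen L) {x w y : S} (hy : IsMin y)
    (hwx : w < x) (hwy : w ≠ y) : L x y ≤ L w y := by
  have hΓ : IsUpSet ({y}ᶜ : Finset S) := fun a b ha hab => by
    simp only [Finset.mem_compl, Finset.mem_singleton] at ha ⊢
    rintro rfl
    exact ha (hab.antisymm (hy hab))
  have h := hL.2 _ hΓ x w
  rw [dotW_eq_sum_of_lt_of_mem L hΓ hwx (by simpa using hwy), compl_compl,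
    Finset.sum_singleton] at h
  linarith

lemma dotW_Ivec_nonneg {f : S → S} (hf : Monotone f) {Γ : Finset S} (hΓ : IsUpSet Γ) (x y : S) :
    0 ≤ dotW (Ivec f) Γ x y := by
  obtain rfl | hxy := eq_or_ne x y
  · exact dotW_self_nonneg (fun _ _ _ => by unfold Ivec; positivity) Γ x
  by_cases hle : x ≤ y ∧ y ∉ Γ
  · rw [dotW_eq_sum_of_lt_of_notMem _ hΓ (hle.1.lt_of_ne hxy) hle.2, Finset.sum_sub_distrib]
    simp only [Ivec, Finset.sum_ite_eq]
    have hfΓ : f x ∈ Γ → f y ∈ Γ := fun h => hΓ _ _ h (hf hle.1)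
    split_ifs <;> simp_all
  by_cases hge : y ≤ x ∧ y ∈ Γ
  · rw [dotW_eq_sum_of_lt_of_mem _ hΓ (hge.1.lt_of_ne hxy.symm) hge.2, Finset.sum_sub_distrib]
    simp only [Ivec, Finset.sum_ite_eq, Finset.mem_compl]
    have hfΓ : f y ∈ Γ → f x ∈ Γ := fun h => hΓ _ _ h (hf hge.1)
    split_ifs <;> simp_all
  exact (dotW_eq_zero _ hle hge).ge

end MonGen

section CMonGen

variable {S : Type*} [Fintype S] [PartialOrder S]

lemma dotW_eq_sum_of_eq_sum_Ivec {L : S → S → ℝ} {Λ : (S → S) → ℝ}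
    (hL : ∀ x y, x ≠ y → L x y = ∑ f : S → S, Λ f * Ivec f x y) (Γ : Finset S) (x y : S) :
    dotW L Γ x y = ∑ f : S → S, Λ f * dotW (Ivec f) Γ x y := by
  simp only [dotW, Finset.mul_sum]
  rw [Finset.sum_comm]
  refine Finset.sum_congr rfl fun p hp => ?_
  rw [hL _ _ (Finset.mem_filter.1 hp).2, Finset.sum_mul]
  simp only [mul_assoc]

lemma IsCMonGen.isMonGen {L : S → S → ℝ} (hL : IsCMonGen L) : IsMonGen L := by
  obtain ⟨Λ, hΛ, hΛmono, hLΛ⟩ := hL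
  have hI : ∀ f : S → S, ∀ x y, 0 ≤ Ivec f x y := fun f x y => by unfold Ivec; positivity
  refine ⟨fun x y hxy => ?_, fun Γ hΓ x y => ?_⟩
  · rw [hLΛ x y hxy]
    exact Finset.sum_nonneg fun f _ => mul_nonneg (hΛ f) (hI f x y)
  · rw [dotW_eq_sum_of_eq_sum_Ivec hLΛ]
    refine Finset.sum_nonneg fun f _ => ?_
    by_cases hf : Monotone f
    · exact mul_nonneg (hΛ f) (dotW_Ivec_nonneg hf hΓ x y)
    · rw [hΛmono f hf, zero_mul]

lemma isCMonGen_zero : IsCMonGen (0 : S → S → ℝ) :=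
  ⟨0, fun _ => le_rfl, fun _ _ => rfl, fun _ _ _ => by simp⟩

lemma IsCMonGen.add {L L' : S → S → ℝ} (hL : IsCMonGen L) (hL' : IsCMonGen L') :
    IsCMonGen (L + L') := by
  obtain ⟨Λ, hΛ, hΛmono, hLΛ⟩ := hL
  obtain ⟨Λ', hΛ', hΛmono', hLΛ'⟩ := hL'
  refine ⟨Λ + Λ', fun f => add_nonneg (hΛ f) (hΛ' f),
    fun f hf => by simp [hΛmono f hf, hΛmono' f hf], fun x y hxy => ?_⟩
  simp only [Pi.add_apply, add_mul, Finset.sum_add_distrib, hLΛ x y hxy, hLΛ' x y hxy]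

lemma IsCMonGen.sum {ι : Type*} {s : Finset ι} {L : ι → S → S → ℝ}
    (hL : ∀ i ∈ s, IsCMonGen (L i)) : IsCMonGen (∑ i ∈ s, L i) :=
  Finset.sum_induction _ IsCMonGen (fun _ _ => IsCMonGen.add) isCMonGen_zero hL

lemma isCMonGen_smul_Ivec {c : ℝ} (hc : 0 ≤ c) {f : S → S} (hf : Monotone f) :
    IsCMonGen (c • Ivec f) := by
  refine ⟨fun g => if g = f then c else 0, fun g => by positivity,
    fun g hg => if_neg fun (h : g = f) => hg (h ▸ hf), fun x y _ => ?_⟩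
  simp [ite_mul, Finset.sum_ite_eq']

lemma IsCMonGen.congr {L L' : S → S → ℝ} (hL : IsCMonGen L)
    (hLL' : ∀ x y, x ≠ y → L x y = L' x y) : IsCMonGen L' := by
  obtain ⟨Λ, hΛ, hΛmono, hLΛ⟩ := hL
  exact ⟨Λ, hΛ, hΛmono, fun x y hxy => (hLL' x y hxy).symm.trans (hLΛ x y hxy)⟩

end CMonGen

section Collapse

variable {S : Type*} [DecidableEq S]

def collapse (T : Finset S) (y x : S) : S := if x ∈ T then y else x

lemma Ivec_collapse_of_ne (T : Finset S) (y : S) {x z : S} (hxz : x ≠ z) :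
    Ivec (collapse T y) x z = if x ∈ T ∧ y = z then 1 else 0 := by
  by_cases hx : x ∈ T <;> simp [Ivec, collapse, hx, hxz]

-- Layer-cake decomposition of the column `L · y` over `{p, q, r}`, valid when `L p y` dominates
-- `L q y` and `L r y`.
noncomputable def column (L : S → S → ℝ) (y p q r : S) : S → S → ℝ :=
  min (L q y) (L r y) • Ivec (collapse {p, q, r} y)
    + (L q y - min (L q y) (L r y)) • Ivec (collapse {p, q} y)
    + (L r y - min (L q y) (L r y)) • Ivec (collapse {p, r} y)
    + (L p y - max (L q y) (L r y)) • Ivec (collapse {p} y)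

lemma column_apply_of_ne (L : S → S → ℝ) {y p q r x z : S} (hxz : x ≠ z) (hyz : y ≠ z) :
    column L y p q r x z = 0 := by
  simp [column, Ivec_collapse_of_ne _ _ hxz, hyz]

lemma column_apply_self (L : S → S → ℝ) {y p q r x : S} (hpq : p ≠ q) (hpr : p ≠ r)
    (hqr : q ≠ r) (hxy : x ≠ y) (hx : x ∈ ({p, q, r} : Finset S)) :
    column L y p q r x y = L x y := by
  have := min_add_max (L q y) (L r y)
  simp only [Finset.mem_insert, Finset.mem_singleton] at hx
  rcases hx with rfl | rfl | rfl <;>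
    simp [column, Ivec_collapse_of_ne _ _ hxy, hpq, hpr, hqr, hpq.symm, hpr.symm, hqr.symm]
  linarith

lemma isCMonGen_column [Fintype S] [PartialOrder S] {L : S → S → ℝ} {y p q r : S}
    (hq : 0 ≤ L q y) (hr : 0 ≤ L r y) (hqp : L q y ≤ L p y) (hrp : L r y ≤ L p y)
    (hmono : ∀ T : Finset S, p ∈ T → T ⊆ {p, q, r} → Monotone (collapse T y)) :
    IsCMonGen (column L y p q r) := by
  have hsub : ∀ T : Finset S, p ∈ T → T ⊆ {p, q, r} → ∀ c : ℝ, 0 ≤ c →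
      IsCMonGen (c • Ivec (collapse T y)) := fun T hp hT c hc =>
    isCMonGen_smul_Ivec hc (hmono T hp hT)
  refine (((hsub {p, q, r} (by simp) subset_rfl _ (le_min hq hr)).add
    (hsub {p, q} (by simp) ?_ _ (sub_nonneg.2 (min_le_left _ _)))).add
    (hsub {p, r} (by simp) ?_ _ (sub_nonneg.2 (min_le_right _ _)))).add
    (hsub {p} (by simp) ?_ _ (sub_nonneg.2 (max_le hqp hrp)))
  all_goals intro t; simp only [Finset.mem_insert, Finset.mem_singleton]; tauto

end Collapse

namespace B

-- `y.twin` is the other point on the level of `y`; `y.cross` and `y.cross.twin` form the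
-- opposite level.
def twin : B → B
  | a => b | b => a | c => d | d => c

def cross : B → B
  | a => c | b => d | c => a | d => b

lemma twin_ne_self (y : B) : y.twin ≠ y := by
  cases y <;> decide

lemma mem_column {x y : B} (hxy : x ≠ y) : x ∈ ({y.twin, y.cross, y.cross.twin} : Finset B) := by
  revert x y; decide

lemma pairwise_ne_twin_cross (y : B) : y.twin ≠ y.cross ∧ y.twin ≠ y.cross.twin ∧ y.cross ≠ y.cross.twin ∧
    y.cross ≠ y ∧ y.cross.twin ≠ y := by
  revert y; decide

lemma monotone_collapse (y : B) (T : Finset B) (hT : y.twin ∈ T)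
    (hTy : T ⊆ {y.twin, y.cross, y.cross.twin}) : Monotone (collapse T y) := by
  revert y T; decide

lemma isMax_and_lt_twin_or_isMin_and_twin_lt (y : B) :
    (IsMax y ∧ ∀ x, x ≠ y → x ≠ y.twin → x < y.twin) ∨
      (IsMin y ∧ ∀ x, x ≠ y → x ≠ y.twin → y.twin < x) := by
  simp only [IsMax, IsMin, lt_iff_le_not_ge]
  revert y; decide

lemma le_twin_of_isMonGen {L : B → B → ℝ} (hL : IsMonGen L) {x y : B} (hxy : x ≠ y)
    (hx : x ≠ y.twin) : L x y ≤ L y.twin y := by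
  rcases isMax_and_lt_twin_or_isMin_and_twin_lt y with ⟨hy, hlt⟩ | ⟨hy, hlt⟩
  · exact hL.le_of_lt_of_isMax hy (hlt x hxy hx) (twin_ne_self y)
  · exact hL.le_of_lt_of_isMin hy (hlt x hxy hx) (twin_ne_self y)

lemma eq_sum_column (L : B → B → ℝ) {x z : B} (hxz : x ≠ z) :
    L x z = (∑ y : B, column L y y.twin y.cross y.cross.twin) x z := by
  obtain ⟨h₁, h₂, h₃, -⟩ := pairwise_ne_twin_cross z
  rw [Finset.sum_apply, Finset.sum_apply, Finset.sum_eq_single z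
    (fun y _ hyz => column_apply_of_ne L hxz hyz) (by simp),
    column_apply_self L h₁ h₂ h₃ hxz (mem_column hxz)]

lemma isCMonGen_of_isMonGen {L : B → B → ℝ} (hL : IsMonGen L) : IsCMonGen L := by
  refine (IsCMonGen.sum fun y _ => isCMonGen_column ?_ ?_ ?_ ?_ (monotone_collapse y)).congr
    fun x z hxz => (eq_sum_column L hxz).symm
  all_goals obtain ⟨h₁, h₂, -, h₄, h₅⟩ := pairwise_ne_twin_cross y
  · exact hL.1 _ _ h₄
  · exact hL.1 _ _ h₅
  · exact le_twin_of_isMonGen hL h₄ h₁.symm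
  · exact le_twin_of_isMonGen hL h₅ h₂.symm

end B

/-- on the four-point bowtie, the cone of monotone generators equals
the cone of completely monotone generators. -/
theorem bowtie_mon_eq_cmon :
    {L : B → B → ℝ | IsMonGen L} = {L : B → B → ℝ | IsCMonGen L} :=
  Set.ext fun _ => ⟨B.isCMonGen_of_isMonGen, IsCMonGen.isMonGen⟩
end
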